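/- For all indices i, j : Fin n: if j lies in the σ-orbit ⟨i⟩ of i then ⁅E i, F j⁆ = H i, and if j does not lie in ⟨i⟩ then ⁅E i, F j⁆ = 0. -/

import Mathlib

open scoped Classical

/-- The σ-orbit `⟨i⟩` of an index `i`, as a finite set. -/
noncomputable def sigmaOrbit {n : ℕ} (σ : Equiv.Perm (Fin n)) (i : Fin n) : Finset (Fin n) :=
  Finset.univ.filter fun k => σ.SameCycle i k

/-- `b i = 3 − ∑_{k ∈ ⟨i⟩} a k i`. -/
noncomputable def bFold {n : ℕ} (a : Fin n → Fin n → ℤ) (σ : Equiv.Perm (Fin n))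
    (i : Fin n) : ℤ :=
  3 - ∑ k ∈ sigmaOrbit σ i, a k i

/-- The folded Cartan matrix `A i j = b i · ∑_{k ∈ ⟨i⟩} a k j`. -/
noncomputable def AFold {n : ℕ} (a : Fin n → Fin n → ℤ) (σ : Equiv.Perm (Fin n))
    (i j : Fin n) : ℤ :=
  bFold a σ i * ∑ k ∈ sigmaOrbit σ i, a k j

/-- `E i = ∑_{k ∈ ⟨i⟩} e k`. -/
noncomputable def EFold {n : ℕ} {L : Type*} [LieRing L]
    (σ : Equiv.Perm (Fin n)) (e : Fin n → L) (i : Fin n) : L :=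
  ∑ k ∈ sigmaOrbit σ i, e k

/-- `F i = b i • ∑_{k ∈ ⟨i⟩} f k`. -/
noncomputable def FFold {n : ℕ} {L : Type*} [LieRing L]
    (a : Fin n → Fin n → ℤ) (σ : Equiv.Perm (Fin n)) (f : Fin n → L) (i : Fin n) : L :=
  bFold a σ i • ∑ k ∈ sigmaOrbit σ i, f k

/-- `H i = b i • ∑_{k ∈ ⟨i⟩} h k`. -/
noncomputable def HFold {n : ℕ} {L : Type*} [LieRing L]
    (a : Fin n → Fin n → ℤ) (σ : Equiv.Perm (Fin n)) (h : Fin n → L) (i : Fin n) : L :=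
  bFold a σ i • ∑ k ∈ sigmaOrbit σ i, h k

/-!
Since `⁅e k, f l⁆` is `h k` on the diagonal and `0` off it, the bracket of the orbit sums
`∑_{⟨i⟩} e` and `∑_{⟨j⟩} f` is the sum of `h` over `⟨i⟩ ∩ ⟨j⟩`, and two orbits are either equal
or disjoint. What remains is `b j = b i` for `j ∈ ⟨i⟩`: by the σ-invariance of `a`, the column sum
`x ↦ ∑_{k ∈ ⟨i⟩} a k x` is σ-invariant, hence constant on the orbit `⟨i⟩`.
-/

lemma Equiv.Perm.SameCycle.apply_eq_of_comp_eq {α β : Type*} [Finite α] {σ : Equiv.Perm α}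
    {g : α → β} (hg : g ∘ σ = g) {x y : α} (hxy : σ.SameCycle x y) : g x = g y := by
  obtain ⟨m, rfl⟩ := hxy.exists_nat_pow_eq
  rw [← Equiv.Perm.iterate_eq_pow]
  exact (congrFun (Function.iterate_invariant hg m) x).symm

lemma lie_sum_sum_eq_sum_inter {ι L : Type*} [DecidableEq ι] [LieRing L] {e f h : ι → L}
    (hef : ∀ i, ⁅e i, f i⁆ = h i) (hef' : ∀ i j, i ≠ j → ⁅e i, f j⁆ = 0) (s t : Finset ι) :
    ⁅∑ k ∈ s, e k, ∑ l ∈ t, f l⁆ = ∑ k ∈ s ∩ t, h k := by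
  have hterm : ∀ k l, ⁅e k, f l⁆ = if k = l then h k else 0 := by
    intro k l
    split_ifs with hkl
    · rw [hkl, hef]
    · exact hef' k l hkl
  simp only [sum_lie_sum, hterm, Finset.sum_ite_eq, Finset.sum_ite_mem]

section Orbits

variable {n : ℕ} {σ : Equiv.Perm (Fin n)} {i j : Fin n}

lemma mem_sigmaOrbit {k : Fin n} : k ∈ sigmaOrbit σ i ↔ σ.SameCycle i k := by
  simp [sigmaOrbit]

lemma sigmaOrbit_eq_of_sameCycle (hij : σ.SameCycle i j) : sigmaOrbit σ i = sigmaOrbit σ j := by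
  ext k
  simp only [mem_sigmaOrbit]
  exact ⟨hij.symm.trans, hij.trans⟩

lemma disjoint_sigmaOrbit_of_not_sameCycle (hij : ¬σ.SameCycle i j) :
    Disjoint (sigmaOrbit σ i) (sigmaOrbit σ j) :=
  Finset.disjoint_left.mpr fun _ hki hkj =>
    hij ((mem_sigmaOrbit.mp hki).trans (mem_sigmaOrbit.mp hkj).symm)

lemma sum_sigmaOrbit_comp_perm {M : Type*} [AddCommMonoid M] (g : Fin n → M) :
    ∑ k ∈ sigmaOrbit σ i, g (σ k) = ∑ k ∈ sigmaOrbit σ i, g k :=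
  Finset.sum_equiv σ (fun k => by simp only [mem_sigmaOrbit, Equiv.Perm.sameCycle_apply_right])
    fun _ _ => rfl

lemma bFold_eq_of_sameCycle {a : Fin n → Fin n → ℤ} (hσ : ∀ i j, a (σ i) (σ j) = a i j)
    (hij : σ.SameCycle i j) : bFold a σ i = bFold a σ j := by
  have hinv : (fun x => ∑ k ∈ sigmaOrbit σ j, a k x) ∘ σ =
      fun x => ∑ k ∈ sigmaOrbit σ j, a k x := by
    funext x
    simp only [Function.comp_apply, ← hσ _ x]
    exact (sum_sigmaOrbit_comp_perm (fun k => a k (σ x))).symm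
  rw [bFold, bFold, sigmaOrbit_eq_of_sameCycle hij, hij.apply_eq_of_comp_eq hinv]

end Orbits

lemma lie_EFold_FFold {n : ℕ} {L : Type*} [LieRing L] {a : Fin n → Fin n → ℤ} {e f h : Fin n → L}
    (hef : ∀ i, ⁅e i, f i⁆ = h i) (hef' : ∀ i j, i ≠ j → ⁅e i, f j⁆ = 0)
    (σ : Equiv.Perm (Fin n)) (i j : Fin n) :
    ⁅EFold σ e i, FFold a σ f j⁆ = bFold a σ j • ∑ k ∈ sigmaOrbit σ i ∩ sigmaOrbit σ j, h k := by
  rw [EFold, FFold, lie_zsmul, lie_sum_sum_eq_sum_inter hef hef']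

theorem folded_E_F_general {L : Type*} [LieRing L]
    {n : ℕ}
    (a : Fin n → Fin n → ℤ)
    (e f h : Fin n → L)
    (hef : ∀ i, ⁅e i, f i⁆ = h i)
    (hef' : ∀ i j, i ≠ j → ⁅e i, f j⁆ = 0)
    (σ : Equiv.Perm (Fin n))
    (hσ : ∀ i j, a (σ i) (σ j) = a i j)
    (i j : Fin n) :
    (j ∈ sigmaOrbit σ i → ⁅EFold σ e i, FFold a σ f j⁆ = HFold a σ h i) ∧
    (j ∉ sigmaOrbit σ i → ⁅EFold σ e i, FFold a σ f j⁆ = 0) := by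
  refine ⟨fun hj => ?_, fun hj => ?_⟩
  · have hij : σ.SameCycle i j := mem_sigmaOrbit.mp hj
    rw [lie_EFold_FFold hef hef', ← sigmaOrbit_eq_of_sameCycle hij, Finset.inter_self,
      ← bFold_eq_of_sameCycle hσ hij, HFold]
  · have hdisj := disjoint_sigmaOrbit_of_not_sameCycle (mt mem_sigmaOrbit.mpr hj)
    rw [lie_EFold_FFold hef hef', Finset.disjoint_iff_inter_eq_empty.mp hdisj, Finset.sum_empty,
      smul_zero]

theorem folded_E_F {K L : Type*} [Field K] [CharZero K] [LieRing L] [LieAlgebra K L]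
    {n : ℕ} (hn : 1 ≤ n)
    (a : Fin n → Fin n → ℤ)
    (hdiag : ∀ i, a i i = 2)
    (hoff : ∀ i j, i ≠ j → a i j ≤ 0)
    (e f h : Fin n → L)
    (hhh : ∀ i j, ⁅h i, h j⁆ = 0)
    (hef : ∀ i, ⁅e i, f i⁆ = h i)
    (hef' : ∀ i j, i ≠ j → ⁅e i, f j⁆ = 0)
    (hhe : ∀ i j, ⁅h i, e j⁆ = a i j • e j)
    (hhf : ∀ i j, ⁅h i, f j⁆ = (-(a i j)) • f j)
    (σ : Equiv.Perm (Fin n))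
    (hσ : ∀ i j, a (σ i) (σ j) = a i j)
    (i j : Fin n) :
    (j ∈ sigmaOrbit σ i → ⁅EFold σ e i, FFold a σ f j⁆ = HFold a σ h i) ∧
    (j ∉ sigmaOrbit σ i → ⁅EFold σ e i, FFold a σ f j⁆ = 0) :=
  folded_E_F_general a e f h hef hef' σ hσ i j
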